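/- arXiv:1905.12435 — 4 statements merged into one kernel-verified Lean document; each statement's English description precedes it below -/
import Mathlib

section
/- Let ℓ ≥ 1, let M be the free ℤ-module ℤ^ℓ with standard basis e_1, …, e_ℓ, and let A = (a_{ij}) be an ℓ×ℓ integer matrix. For each i define the ℤ-linear operator s_i : M → M by s_i(e_j) = e_j − a_{ij} e_i, and let c = s_1 ∘ s_2 ∘ ⋯ ∘ s_ℓ. Let C be the matrix of c with respect to the basis (e_1, …, e_ℓ) (i.e., C_{ij} is the coefficient of e_i in c(e_j)), let I be the ℓ×ℓ identity matrix, and let U and V be the ℓ×ℓ matrices defined by u_{ij} = a_{ij} if i < j and u_{ij} = 0 otherwise, and v_{ij} = a_{ij} if i ≥ j and v_{ij} = 0 otherwise. Then (I + U)·C = I − V (equivalently, C = (I+U)^{-1}(I−V), the matrix I+U being unipotent upper triangular and hence invertible). -/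
/-!
The matrix of `s i` is `1 - eᵢ A`, where `eᵢ` is the diagonal matrix unit, and
`U = ∑_{i < j} eᵢ A eⱼ`. For orthogonal idempotents `e₁, …, eₗ` in any ring one has
`(1 + U) (1 - e₁ a) ⋯ (1 - eₗ a) = 1 + U - (∑ eᵢ) a`, by peeling off the first factor:
`(1 + U) e₁ = e₁` since every term of `U` ends in some `eⱼ` with `j > 1`, and the remaining
factors `1 - eⱼ a` are invisible to `1 - ∑_{j > 1} eⱼ`. For the matrix units `∑ eᵢ = 1`,
and `U - A = -V`.
-/

open Matrix

theorem List.mul_prod_eq_self_of_forall_mem {R : Type*} [Monoid R] {x : R} {L : List R}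
    (h : ∀ y ∈ L, x * y = x) : x * L.prod = x := by
  induction L with
  | nil => simp
  | cons y L ih =>
    rw [List.prod_cons, ← mul_assoc, h y List.mem_cons_self]
    exact ih fun z hz => h z (List.mem_cons_of_mem y hz)

section Peirce

variable {R : Type*} [Ring R]

/-- The strictly upper triangular part of `a` in the Peirce decomposition along `e`. -/
def peirceUpper {n : ℕ} (e : Fin n → R) (a : R) : R :=
  ∑ i, ∑ j, if i < j then e i * a * e j else 0

theorem peirceUpper_succ {n : ℕ} (e : Fin (n + 1) → R) (a : R) :
    peirceUpper e a
      = e 0 * a * ∑ j : Fin n, e j.succ + peirceUpper (fun i : Fin n => e i.succ) a := by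
  simp [peirceUpper, Fin.sum_univ_succ, Fin.succ_pos, Finset.mul_sum]

theorem OrthogonalIdempotents.one_add_peirceUpper_mul_prod {n : ℕ} {e : Fin n → R}
    (he : OrthogonalIdempotents e) (a : R) :
    (1 + peirceUpper e a) * (List.ofFn fun i => 1 - e i * a).prod
      = 1 + peirceUpper e a - (∑ i, e i) * a := by
  induction n with
  | zero => simp [peirceUpper]
  | succ n ih =>
    set σ := ∑ j : Fin n, e j.succ
    set U' := peirceUpper (fun i : Fin n => e i.succ) a
    have htail : OrthogonalIdempotents fun i : Fin n => e i.succ := he.embedding (Fin.succEmb n)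
    have hhead : (1 + peirceUpper e a) * (1 - e 0 * a) = 1 + U' - e 0 * a * (1 - σ) := by
      have hσ : σ * e 0 = 0 := by
        simp [σ, Finset.sum_mul, he.ortho (Fin.succ_ne_zero _)]
      have hU' : U' * e 0 = 0 := by
        simp [U', peirceUpper, Finset.sum_mul, mul_assoc, he.ortho (Fin.succ_ne_zero _)]
      have hfix : (1 + peirceUpper e a) * e 0 = e 0 := by
        rw [peirceUpper_succ, add_mul, add_mul, mul_assoc, hσ, hU', one_mul, mul_zero, add_zero,
          add_zero]
      rw [mul_sub, mul_one, ← mul_assoc, hfix, peirceUpper_succ]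
      noncomm_ring
    have htail_fix : (1 - σ) * (List.ofFn fun i => 1 - e i.succ * a).prod = 1 - σ := by
      refine List.mul_prod_eq_self_of_forall_mem fun y hy => ?_
      obtain ⟨k, rfl⟩ := List.mem_ofFn.mp hy
      have hk : (1 - σ) * e k.succ = 0 := by
        rw [sub_mul, one_mul, Finset.sum_mul]
        simp [htail.mul_eq]
      rw [mul_sub, mul_one, ← mul_assoc, hk, zero_mul, sub_zero]
    rw [List.ofFn_succ, List.prod_cons, ← mul_assoc, hhead, sub_mul, ih htail, mul_assoc,
      mul_assoc, htail_fix, peirceUpper_succ, Fin.sum_univ_succ]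
    noncomm_ring

theorem Matrix.peirceUpper_single_one {m : ℕ} (A : Matrix (Fin m) (Fin m) R) :
    peirceUpper (fun i => Matrix.single i i 1) A = of fun i j => if i < j then A i j else 0 := by
  ext p q
  simp only [peirceUpper, Matrix.sum_apply, apply_ite (fun M : Matrix _ _ R => M p q),
    single_mul_mul_single, single_apply, one_mul, mul_one, zero_apply, of_apply]
  rw [Finset.sum_eq_single p (by intros; simp_all), Finset.sum_eq_single q (by intros; simp_all)]
    <;> simp

end Peirce

section MatrixUnits

variable {n : Type*} [Fintype n] [DecidableEq n]

theorem Matrix.completeOrthogonalIdempotents_single_one {α : Type*} [Semiring α] :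
    CompleteOrthogonalIdempotents fun i : n => (Matrix.single i i 1 : Matrix n n α) :=
  ⟨⟨fun i => by simp [IsIdempotentElem], fun _ _ hij => by simp [hij]⟩, sum_single_one⟩

theorem LinearMap.toMatrix'_list_prod {R : Type*} [CommSemiring R]
    (L : List (Module.End R (n → R))) :
    LinearMap.toMatrix' L.prod = (L.map LinearMap.toMatrix').prod :=
  map_list_prod LinearMap.toMatrixAlgEquiv' L

theorem LinearMap.toMatrix'_eq_one_sub_single_mul {R : Type*} [CommRing R] {A : Matrix n n R}
    {i : n} {f : Module.End R (n → R)}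
    (hf : ∀ j, f (Pi.single j 1) = Pi.single j 1 - A i j • Pi.single i 1) :
    LinearMap.toMatrix' f = 1 - Matrix.single i i 1 * A := by
  ext p q
  rw [LinearMap.toMatrix'_apply, hf]
  by_cases hp : p = i
  · subst hp
    simp [one_apply, Pi.single_apply]
  · simp [one_apply, Pi.single_apply, hp]

end MatrixUnits

theorem coxeter_element_matrix_formula_general (ℓ : ℕ)
    (A : Matrix (Fin ℓ) (Fin ℓ) ℤ)
    (s : Fin ℓ → Module.End ℤ (Fin ℓ → ℤ))
    (hs : ∀ i j : Fin ℓ, s i (Pi.single j 1) = Pi.single j 1 - A i j • Pi.single i 1)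
    (c : Module.End ℤ (Fin ℓ → ℤ)) (hc : c = ((List.finRange ℓ).map s).prod)
    (C : Matrix (Fin ℓ) (Fin ℓ) ℤ)
    (hC : C = LinearMap.toMatrix (Pi.basisFun ℤ (Fin ℓ)) (Pi.basisFun ℤ (Fin ℓ)) c)
    (U V : Matrix (Fin ℓ) (Fin ℓ) ℤ)
    (hU : ∀ i j : Fin ℓ, U i j = if i < j then A i j else 0)
    (hV : ∀ i j : Fin ℓ, V i j = if i < j then 0 else A i j) :
    (1 + U) * C = 1 - V := by
  have hCprod : C = (List.ofFn fun i => 1 - Matrix.single i i 1 * A).prod := by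
    rw [hC, LinearMap.toMatrix_eq_toMatrix', hc, LinearMap.toMatrix'_list_prod, List.map_map,
      List.ofFn_eq_map]
    congr 1
    exact List.map_congr_left fun i _ => LinearMap.toMatrix'_eq_one_sub_single_mul (hs i)
  have hUpeirce : U = peirceUpper (fun i => Matrix.single i i 1) A := by
    ext i j
    rw [hU, Matrix.peirceUpper_single_one, of_apply]
  have hUV : U + V = A := by
    ext i j
    rw [Matrix.add_apply, hU, hV]
    split_ifs <;> simp
  rw [hCprod, hUpeirce, completeOrthogonalIdempotents_single_one.toOrthogonalIdempotents
    |>.one_add_peirceUpper_mul_prod, sum_single_one, one_mul, ← hUpeirce, ← hUV]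
  abel

/-- For the operators `s i` on `ℤ^ℓ` defined by `s i (e j) = e j - A i j • e i`,
the matrix `C` of `c = s 1 ∘ ⋯ ∘ s ℓ` with respect to the standard basis satisfies
`(I + U) * C = I - V`, where `U` is the strict upper triangular part of `A` and `V` the
lower triangular part (including the diagonal). -/
theorem coxeter_element_matrix_formula (ℓ : ℕ) (hℓ : 1 ≤ ℓ)
    (A : Matrix (Fin ℓ) (Fin ℓ) ℤ)
    (s : Fin ℓ → Module.End ℤ (Fin ℓ → ℤ))
    (hs : ∀ i j : Fin ℓ, s i (Pi.single j 1) = Pi.single j 1 - A i j • Pi.single i 1)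
    (c : Module.End ℤ (Fin ℓ → ℤ)) (hc : c = ((List.finRange ℓ).map s).prod)
    (C : Matrix (Fin ℓ) (Fin ℓ) ℤ)
    (hC : C = LinearMap.toMatrix (Pi.basisFun ℤ (Fin ℓ)) (Pi.basisFun ℤ (Fin ℓ)) c)
    (U V : Matrix (Fin ℓ) (Fin ℓ) ℤ)
    (hU : ∀ i j : Fin ℓ, U i j = if i < j then A i j else 0)
    (hV : ∀ i j : Fin ℓ, V i j = if i < j then 0 else A i j) :
    (1 + U) * C = 1 - V :=
  coxeter_element_matrix_formula_general ℓ A s hs c hc C hC U V hU hV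
end

section
/- Let n ≥ 0 be an integer, set ε = (−1)^{n(n−1)/2}, and let L be an ℓ×ℓ lower triangular integer matrix all of whose diagonal entries equal −ε. Set S = −L − (−1)^n L^t. On M = ℤ^ℓ with standard basis e_1, …, e_ℓ, define for each i the ℤ-linear operator s_i by s_i(e_j) = e_j − ε S_{ji} e_i, let c = s_1 ∘ ⋯ ∘ s_ℓ, and let C be the matrix of c with respect to the basis (C_{ij} the coefficient of e_i in c(e_j)). Then L^t · C = (−1)^{n+1} L; equivalently, C = (−1)^{n+1}(L^t)^{-1} L. -/
open Matrix

/-!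
Put `U = -ε Lᵀ` and `σ = (-1)ⁿ`. Since `ε² = 1`, `U` is upper unitriangular and `εSᵀ = U + σUᵀ`,
so `s i x = x - ((U + σUᵀ) x)ᵢ eᵢ`. Apply the factors of `c = s₁ ⋯ s_ℓ` to `x` from the right:
`s k` only changes coordinate `k`, which it moves so that `(U y)ₖ` becomes `-σ (Uᵀ y)ₖ`.
Triangularity makes both sides insensitive to the later steps: `(Uᵀ y)ₖ` only reads coordinates
`≤ k`, which are still those of `x`, and coordinate `k` enters `(U y)_q` for `q > k` with
coefficient `U q k = 0`. Hence `U c = -σ Uᵀ`, which is the claim multiplied by `-ε`.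
-/

namespace Matrix

variable {R ι : Type*} [CommRing R] [Fintype ι]

theorem transpose_mulVec_apply_eq_of_blockTriangular [LinearOrder ι] {U : Matrix ι ι R}
    (hU : U.BlockTriangular id) {x y : ι → R} {k : ι} (hxy : ∀ p ≤ k, x p = y p) :
    (Uᵀ *ᵥ x) k = (Uᵀ *ᵥ y) k := by
  refine Finset.sum_congr rfl fun p _ ↦ ?_
  rcases le_or_gt p k with hpk | hkp
  · rw [hxy p hpk]
  · simp only [transpose_apply, hU hkp, zero_mul]

variable [DecidableEq ι]

/-- For `A = εSᵀ` this is the Picard–Lefschetz transformation `s i` of the paper. -/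
def picardLefschetz (A : Matrix ι ι R) (i : ι) : Module.End R (ι → R) :=
  LinearMap.id - LinearMap.single R (fun _ ↦ R) i ∘ₗ LinearMap.proj i ∘ₗ A.mulVecLin

theorem picardLefschetz_apply (A : Matrix ι ι R) (i : ι) (x : ι → R) :
    picardLefschetz A i x = x - Pi.single i ((A *ᵥ x) i) :=
  rfl

theorem picardLefschetz_single_one (A : Matrix ι ι R) (i j : ι) :
    picardLefschetz A i (Pi.single j 1) = Pi.single j 1 - A i j • Pi.single i 1 := by
  rw [picardLefschetz_apply, mulVec_single_one, ← Pi.single_smul', smul_eq_mul, mul_one]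
  rfl

theorem prod_picardLefschetz_apply_of_notMem (A : Matrix ι ι R) {l : List ι} {p : ι}
    (hp : p ∉ l) (x : ι → R) : (l.map (picardLefschetz A)).prod x p = x p := by
  induction l with
  | nil => rfl
  | cons k t ih =>
    rw [List.mem_cons, not_or] at hp
    simp only [List.map_cons, List.prod_cons, Module.End.mul_apply, picardLefschetz_apply,
      Pi.sub_apply, Pi.single_apply, if_neg hp.1, sub_zero, ih hp.2]

variable [LinearOrder ι] {U : Matrix ι ι R}

theorem mulVec_prod_picardLefschetz_apply (hU : U.BlockTriangular id) (hdiag : ∀ i, U i i = 1)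
    (σ : R) {l : List ι} (hl : l.Pairwise (· < ·)) (x : ι → R) {q : ι} (hq : q ∈ l) :
    (U *ᵥ (l.map (picardLefschetz (U + σ • Uᵀ))).prod x) q = -σ * (Uᵀ *ᵥ x) q := by
  induction l with
  | nil => cases hq
  | cons k t ih =>
    rw [List.pairwise_cons] at hl
    simp only [List.map_cons, List.prod_cons, Module.End.mul_apply]
    set y := (t.map (picardLefschetz (U + σ • Uᵀ))).prod x
    have hstep : (U *ᵥ picardLefschetz (U + σ • Uᵀ) k y) q
        = (U *ᵥ y) q - U q k * ((U + σ • Uᵀ) *ᵥ y) k := by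
      rw [picardLefschetz_apply, mulVec_sub, mulVec_single, Pi.sub_apply]
      simp
    rw [hstep]
    rcases List.mem_cons.mp hq with rfl | hqt
    · have hy : (Uᵀ *ᵥ y) q = (Uᵀ *ᵥ x) q :=
        transpose_mulVec_apply_eq_of_blockTriangular hU fun p hpq ↦
          prod_picardLefschetz_apply_of_notMem _ (fun hpt ↦ (hl.1 p hpt).not_ge hpq) x
      rw [hdiag, add_mulVec, smul_mulVec, Pi.add_apply, Pi.smul_apply, smul_eq_mul, hy]
      ring
    · rw [hU (hl.1 q hqt), zero_mul, sub_zero, ih hl.2 hqt]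

theorem mul_toMatrix'_prod_picardLefschetz (hU : U.BlockTriangular id)
    (hdiag : ∀ i, U i i = 1) (σ : R) {l : List ι} (hl : l.Pairwise (· < ·))
    (hcover : ∀ i, i ∈ l) :
    U * LinearMap.toMatrix' (l.map (picardLefschetz (U + σ • Uᵀ))).prod = -σ • Uᵀ := by
  ext k j
  have h := mulVec_prod_picardLefschetz_apply hU hdiag σ hl (Pi.single j 1) (hcover k)
  rw [mulVec_single_one] at h
  simpa [mul_apply, mulVec, dotProduct, LinearMap.toMatrix'_apply] using h

end Matrix

/-- Let `ε = (-1)^(n(n-1)/2)` and let `L` be a lower triangular integer matrix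
with all diagonal entries equal to `-ε`. Set `S = -L - (-1)^n Lᵀ`. For the operators
`s i` on `ℤ^ℓ` defined by `s i (e j) = e j - ε S j i • e i`, the matrix `C` of
`c = s 1 ∘ ⋯ ∘ s ℓ` with respect to the standard basis satisfies
`Lᵀ * C = (-1)^(n+1) • L`, i.e. `C = (-1)^(n+1) (Lᵀ)⁻¹ L`. -/
theorem monodromy_matrix_from_seifert_matrix (n ℓ : ℕ)
    (ε : ℤ) (hε : ε = (-1 : ℤ) ^ (n * (n - 1) / 2))
    (L : Matrix (Fin ℓ) (Fin ℓ) ℤ)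
    (hlow : ∀ i j : Fin ℓ, i < j → L i j = 0)
    (hdiag : ∀ i : Fin ℓ, L i i = -ε)
    (S : Matrix (Fin ℓ) (Fin ℓ) ℤ)
    (hS : S = -L - ((-1 : ℤ) ^ n) • Lᵀ)
    (s : Fin ℓ → Module.End ℤ (Fin ℓ → ℤ))
    (hs : ∀ i j : Fin ℓ, s i (Pi.single j 1) = Pi.single j 1 - (ε * S j i) • Pi.single i 1)
    (c : Module.End ℤ (Fin ℓ → ℤ)) (hc : c = ((List.finRange ℓ).map s).prod)
    (C : Matrix (Fin ℓ) (Fin ℓ) ℤ)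
    (hC : C = LinearMap.toMatrix (Pi.basisFun ℤ (Fin ℓ)) (Pi.basisFun ℤ (Fin ℓ)) c) :
    Lᵀ * C = ((-1 : ℤ) ^ (n + 1)) • L := by
  have hεε : ε * ε = 1 := by
    rw [hε, ← pow_add, ← two_mul, pow_mul]; norm_num
  set U := (-ε) • Lᵀ
  have hU : U.BlockTriangular id := fun i j hji ↦ by
    simp only [U, Matrix.smul_apply, transpose_apply, hlow j i hji, smul_zero]
  have hUdiag : ∀ i, U i i = 1 := fun i ↦ by
    simp only [U, Matrix.smul_apply, transpose_apply, hdiag, smul_eq_mul, neg_mul_neg, hεε]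
  have hs_eq : s = picardLefschetz (U + (-1) ^ n • Uᵀ) := by
    funext i
    refine (Pi.basisFun ℤ (Fin ℓ)).ext fun j ↦ ?_
    rw [Pi.basisFun_apply, hs, picardLefschetz_single_one, hS]
    simp only [U, Matrix.sub_apply, Matrix.neg_apply, Matrix.smul_apply, Matrix.add_apply,
      transpose_apply, smul_eq_mul]
    ring
  have hUC : U * C = -(-1) ^ n • Uᵀ := by
    rw [hC, hc, hs_eq, LinearMap.toMatrix_eq_toMatrix']
    exact mul_toMatrix'_prod_picardLefschetz hU hUdiag _ (List.pairwise_lt_finRange ℓ)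
      List.mem_finRange
  calc Lᵀ * C = (-ε * -ε) • (Lᵀ * C) := by rw [neg_mul_neg, hεε, one_smul]
    _ = -ε • (U * C) := by rw [smul_mul_assoc, smul_smul]
    _ = (-1) ^ (n + 1) • L := by
      rw [hUC, transpose_smul, transpose_transpose, smul_smul, smul_smul]
      congr 1
      linear_combination -(-1) ^ n * hεε
end

section
/- Let L_1 and L_2 be ℓ×ℓ lower triangular matrices over ℚ with nonzero diagonal entries such that (L_1)_{ii} = (L_2)_{ii} for every i. If L_1^{-1} L_1^t = L_2^{-1} L_2^t, then L_1 = L_2. -/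
open Matrix

/-- A lower triangular rational matrix with prescribed nonzero diagonal entries
is determined by the "monodromy matrix" `L⁻¹ * Lᵀ` (Lazzeri; Arnold–Gusein-Zade–Varchenko). -/
theorem seifert_matrix_determined_by_monodromy (ℓ : ℕ)
    (L₁ L₂ : Matrix (Fin ℓ) (Fin ℓ) ℚ)
    (hlow₁ : ∀ i j : Fin ℓ, i < j → L₁ i j = 0)
    (hlow₂ : ∀ i j : Fin ℓ, i < j → L₂ i j = 0)
    (hdiag₁ : ∀ i : Fin ℓ, L₁ i i ≠ 0)
    (hdiag₂ : ∀ i : Fin ℓ, L₂ i i ≠ 0)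
    (hdiag : ∀ i : Fin ℓ, L₁ i i = L₂ i i)
    (h : L₁⁻¹ * L₁ᵀ = L₂⁻¹ * L₂ᵀ) :
    L₁ = L₂ := by
  have hbt₁ : L₁.BlockTriangular (OrderDual.toDual : Fin ℓ → (Fin ℓ)ᵒᵈ) :=
    fun i j hij => hlow₁ i j hij
  have hbt₂ : L₂.BlockTriangular (OrderDual.toDual : Fin ℓ → (Fin ℓ)ᵒᵈ) :=
    fun i j hij => hlow₂ i j hij
  have hdet₁ : L₁.det ≠ 0 := by
    rw [det_of_lowerTriangular L₁ hbt₁]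
    exact Finset.prod_ne_zero_iff.mpr fun i _ => hdiag₁ i
  have hdet₂ : L₂.det ≠ 0 := by
    rw [det_of_lowerTriangular L₂ hbt₂]
    exact Finset.prod_ne_zero_iff.mpr fun i _ => hdiag₂ i
  have hinv₁ : Invertible L₁ := L₁.invertibleOfIsUnitDet (isUnit_iff_ne_zero.mpr hdet₁)
  have hinv₂ : Invertible L₂ := L₂.invertibleOfIsUnitDet (isUnit_iff_ne_zero.mpr hdet₂)
  set N : Matrix (Fin ℓ) (Fin ℓ) ℚ := L₁⁻¹ * L₂ with hN
  have hNbt : N.BlockTriangular (OrderDual.toDual : Fin ℓ → (Fin ℓ)ᵒᵈ) :=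
    (blockTriangular_inv_of_blockTriangular hbt₁).mul hbt₂
  -- show Nᵀ = L₂ * L₁⁻¹, which is lower triangular
  have key : L₂ * L₁⁻¹ = Nᵀ := by
    have h1 : L₂ * (L₁⁻¹ * L₁ᵀ) = L₂ᵀ := by
      rw [h, ← Matrix.mul_assoc, mul_nonsing_inv L₂ (isUnit_iff_ne_zero.mpr hdet₂), Matrix.one_mul]
    have h2 : (L₂ * L₁⁻¹) * L₁ᵀ = L₂ᵀ := by rw [Matrix.mul_assoc]; exact h1
    have hLt : L₁ᵀ * (L₁ᵀ)⁻¹ = 1 :=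
      mul_nonsing_inv L₁ᵀ (by rwa [isUnit_iff_ne_zero, det_transpose])
    calc L₂ * L₁⁻¹ = (L₂ * L₁⁻¹) * (L₁ᵀ * (L₁ᵀ)⁻¹) := by rw [hLt, Matrix.mul_one]
      _ = ((L₂ * L₁⁻¹) * L₁ᵀ) * (L₁ᵀ)⁻¹ := by simp only [Matrix.mul_assoc]
      _ = L₂ᵀ * (L₁ᵀ)⁻¹ := by rw [h2]
      _ = Nᵀ := by rw [hN, transpose_mul, transpose_nonsing_inv]
  have hNTbt : Nᵀ.BlockTriangular (OrderDual.toDual : Fin ℓ → (Fin ℓ)ᵒᵈ) := by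
    rw [← key]
    exact hbt₂.mul (blockTriangular_inv_of_blockTriangular hbt₁)
  -- N is diagonal
  have hNdiag : ∀ i j : Fin ℓ, i ≠ j → N i j = 0 := by
    intro i j hij
    rcases lt_or_gt_of_ne hij with hlt | hgt
    · exact hNbt (by exact hlt)
    · exact hNTbt (by exact hgt)
  have hL₂eq : L₂ = L₁ * N := by
    rw [hN, ← Matrix.mul_assoc, mul_nonsing_inv L₁ (isUnit_iff_ne_zero.mpr hdet₁),
      Matrix.one_mul]
  have hNone : ∀ i : Fin ℓ, N i i = 1 := by
    intro i
    have : L₂ i i = L₁ i i * N i i := by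
      rw [hL₂eq, Matrix.mul_apply]
      rw [Finset.sum_eq_single i]
      · intro k _ hk; rw [hNdiag k i hk, mul_zero]
      · intro hk; exact absurd (Finset.mem_univ i) hk
    have h2 : L₁ i i * N i i = L₁ i i * 1 := by
      linear_combination -this - hdiag i
    exact mul_left_cancel₀ (hdiag₁ i) h2
  have hNeq : N = 1 := by
    ext i j
    by_cases hij : i = j
    · subst hij; rw [hNone i, Matrix.one_apply_eq]
    · rw [hNdiag i j hij, Matrix.one_apply_ne hij]
  rw [hL₂eq, hNeq, Matrix.mul_one]
end

section
/- Let F be the free group on μ generators x_1, …, x_μ. Call a tuple (w_1, …, w_μ) ∈ F^μ a free generating system if there is an automorphism φ of F with φ(x_i) = w_i for all i. Let (ω_1, …, ω_μ) and (ω'_1, …, ω'_μ) be two free generating systems of F such that ω_i is conjugate to ω'_i in F for each i = 1, …, μ. Then (ω'_1, …, ω'_μ) can be obtained from (ω_1, …, ω_μ) by a finite sequence of elementary moves, where an elementary move with indices i ≠ j replaces ω_j by ω_i^{-1} ω_j ω_i (operation α_i(j)) or by ω_i ω_j ω_i^{-1} (operation β_i(j)) and leaves all other entries unchanged. -/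
/-- An elementary move on `μ`-tuples of elements of the free group: for `i ≠ j`, replace
the `j`-th entry `w j` by `(w i)⁻¹ * w j * w i` (operation `α_i(j)`) or by
`w i * w j * (w i)⁻¹` (operation `β_i(j)`), leaving all other entries unchanged. -/
def elemConjMove (μ : ℕ) (w w' : Fin μ → FreeGroup (Fin μ)) : Prop :=
  ∃ i j : Fin μ, i ≠ j ∧
    (w' = Function.update w j ((w i)⁻¹ * w j * w i) ∨
     w' = Function.update w j (w i * w j * (w i)⁻¹))

/-!
Transporting by `φ⁻¹` reduces to the case `ω = (x_1, …, x_μ)`. Then `ω'_i = u_i x_i u_i⁻¹`, where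
the reduced word of `u_i` can be chosen not to end in `x_i^{±1}`, so that this expression is reduced
as written. If some `u_i x_i^{±1}` is a prefix of `u_j` with `i ≠ j`, conjugating `ω'_j` by
`ω'_i^{±1}` deletes that letter `x_i^{±1}` from `u_j`: an elementary move that decreases the total
length. Otherwise, for every reduced word `x_{i_1}^{ε_1} ⋯ x_{i_n}^{ε_n}` the reduced word of
`ω'_{i_1}^{ε_1} ⋯ ω'_{i_n}^{ε_n}` begins with `u_{i_1} x_{i_1}^{ε_1}`: cancellation between
neighbouring factors never reaches a middle letter. As the `ω'_i` generate `F`, writing `x_k` in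
this way forces `u_k = 1`. Moves are reversible and commute with automorphisms, which gives the
theorem.
-/

theorem List.exists_longest_common_prefix {β : Type*} (l₁ l₂ : List β) :
    ∃ c r₁ r₂, l₁ = c ++ r₁ ∧ l₂ = c ++ r₂ ∧ ∀ a ∈ r₁.head?, ∀ b ∈ r₂.head?, a ≠ b := by
  induction l₁ generalizing l₂ with
  | nil => exact ⟨[], [], l₂, rfl, rfl, by simp⟩
  | cons a l₁ ih =>
    rcases l₂ with _ | ⟨b, l₂⟩
    · exact ⟨[], a :: l₁, [], rfl, rfl, by simp⟩
    by_cases hab : a = b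
    · obtain ⟨c, r₁, r₂, rfl, rfl, hr⟩ := ih l₂
      exact ⟨a :: c, r₁, r₂, rfl, by rw [hab]; rfl, hr⟩
    · exact ⟨[], a :: l₁, b :: l₂, rfl, rfl, by simpa using hab⟩

namespace FreeGroup

variable {α : Type*}

theorem mk_singleton (i : α) (b : Bool) : mk [(i, b)] = bif b then of i else (of i)⁻¹ := by
  cases b <;> rfl

variable [DecidableEq α]

theorem toWord_mul_mk_singleton_mul_inv {u : FreeGroup α} {a : α × Bool}
    (hu : ∀ p ∈ u.toWord.getLast?, p.1 ≠ a.1) :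
    (u * mk [a] * u⁻¹).toWord = u.toWord ++ a :: invRev u.toWord := by
  have hred : IsReduced (u.toWord ++ [a] ++ invRev u.toWord) := by
    refine .append_overlap (List.isChain_append.2 ⟨isReduced_toWord, IsReduced.singleton, ?_⟩)
      (List.isChain_append.2 ⟨IsReduced.singleton, ?_, ?_⟩) (List.cons_ne_nil a [])
    · simp only [List.head?_cons, Option.mem_def, Option.some.injEq]
      rintro p hp _ rfl h
      exact absurd h (hu p hp)
    · rw [← toWord_inv]; exact isReduced_toWord
    · simp only [List.getLast?_singleton, Option.mem_def, Option.some.injEq, invRev,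
        List.head?_reverse, List.getLast?_map, Option.map_eq_some_iff]
      rintro _ rfl _ ⟨p, hp, rfl⟩ h
      exact absurd h.symm (hu p hp)
  rw [← mk_toWord (x := u), inv_mk, mul_mk, mul_mk, toWord_mk, mk_toWord, hred.reduce_eq]
  simp

theorem norm_mul_mk_singleton_mul_inv {u : FreeGroup α} {a : α × Bool}
    (hu : ∀ p ∈ u.toWord.getLast?, p.1 ≠ a.1) : (u * mk [a] * u⁻¹).norm = 2 * u.norm + 1 := by
  rw [norm, toWord_mul_mk_singleton_mul_inv hu]
  simp only [List.length_append, List.length_cons, invRev_length, norm]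
  omega

theorem exists_eq_conj_of_isConj {i : α} {g : FreeGroup α} (h : IsConj (of i) g) :
    ∃ u : FreeGroup α, (∀ p ∈ u.toWord.getLast?, p.1 ≠ i) ∧ g = u * of i * u⁻¹ := by
  obtain ⟨c, rfl⟩ := isConj_iff.1 h
  clear h
  induction hn : c.norm using Nat.strong_induction_on generalizing c with
  | _ n ih =>
    by_cases hc : ∀ p ∈ c.toWord.getLast?, p.1 ≠ i
    · exact ⟨c, hc, rfl⟩
    push Not at hc
    obtain ⟨⟨i, b⟩, hp, rfl⟩ := hc
    obtain ⟨U, hU⟩ := List.getLast?_eq_some_iff.1 hp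
    have hcomm : Commute (mk [(i, b)] : FreeGroup α) (of i) := by
      cases b
      · exact (Commute.refl (of i)).inv_left
      · exact Commute.refl _
    have hlt : (mk U).norm < n := by
      calc (mk U).norm ≤ U.length := norm_mk_le
        _ < n := by rw [← hn, norm, hU]; simp
    obtain ⟨u, hu, hconj⟩ := ih _ hlt (mk U) rfl
    refine ⟨u, hu, ?_⟩
    rw [← hconj, ← mk_toWord (x := c), hU, ← mul_mk, mul_assoc (mk U), hcomm.eq]
    group

theorem prefix_toWord_mul {x y : FreeGroup α} {U : List (α × Bool)} {a : α × Bool}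
    (hx : x.toWord = U ++ a :: invRev U) (hy : ¬U ++ [(a.1, !a.2)] <+: y.toWord) :
    U ++ [a] <+: (x * y).toWord := by
  -- In `U ++ a :: invRev U ++ y.toWord` only the longest common prefix `C` of `U` and `y.toWord`
  -- cancels; `hy` is what stops the cancellation at `a`.
  obtain ⟨C, X, Y, hU, hY, hXY⟩ := List.exists_longest_common_prefix U y.toWord
  have hxy : x * y = mk (U ++ a :: invRev X ++ Y) := by
    have hx' : x = mk (U ++ a :: invRev X) * (mk C)⁻¹ := by
      rw [← mk_toWord (x := x), hx, inv_mk, mul_mk, hU, invRev_append]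
      simp
    have hy' : y = mk C * mk Y := by rw [← mk_toWord (x := y), hY, mul_mk]
    rw [hx', hy', mul_assoc, inv_mul_cancel_left, mul_mk]
  have hred : IsReduced (U ++ a :: invRev X ++ Y) := by
    refine List.isChain_append.2 ⟨?_, ?_, ?_⟩
    · exact isReduced_toWord.infix ⟨[], invRev C, by rw [hx, hU, invRev_append]; simp⟩
    · exact (hY ▸ isReduced_toWord : IsReduced (C ++ Y)).infix (List.suffix_append C Y).isInfix
    · rcases X with _ | ⟨x₀, X⟩
      · rintro p hp q hq hpq
        rw [invRev_empty, List.getLast?_concat, Option.mem_def, Option.some.injEq] at hp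
        rcases Y with _ | ⟨y₀, Y⟩
        · simp at hq
        rw [List.head?_cons, Option.mem_def, Option.some.injEq] at hq
        subst hp hq
        by_contra hne
        refine hy ⟨Y, ?_⟩
        rw [hY, (Prod.ext hpq.symm (Bool.eq_not_iff.2 (Ne.symm hne)) : y₀ = (a.1, !a.2)), hU]
        simp
      · rintro p hp q hq hpq
        rw [invRev_cons, ← List.cons_append, ← List.append_assoc,
          show invRev [x₀] = [(x₀.1, !x₀.2)] from rfl, List.getLast?_concat, Option.mem_def,
          Option.some.injEq] at hp
        subst hp
        by_contra hne
        exact hXY x₀ rfl q hq (Prod.ext hpq (by simpa using hne))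
  rw [hxy, toWord_mk, hred.reduce_eq]
  exact ⟨invRev X ++ Y, by simp⟩

theorem norm_mul_mul_inv_le (v x : FreeGroup α) : (v * x * v⁻¹).norm ≤ 2 * v.norm + x.norm := by
  have h₁ := norm_mul_le (v * x) v⁻¹
  have h₂ := norm_mul_le v x
  rw [norm_inv_eq] at h₁
  omega

def ConjugatorPrefixFree (u : α → FreeGroup α) : Prop :=
  ∀ i j, i ≠ j → ∀ b : Bool, ¬(u i).toWord ++ [(i, b)] <+: (u j).toWord

namespace ConjugatorPrefixFree

variable {u w : α → FreeGroup α}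

theorem eq_of_prefix (hfree : ConjugatorPrefixFree u) {i j : α} {b c : Bool}
    (h : (u i).toWord ++ [(i, b)] <+: (u j).toWord ++ [(j, c)]) : (i, b) = (j, c) := by
  rcases List.prefix_concat_iff.1 h with h | h
  · simpa using (List.append_inj' h rfl).2
  · by_cases hij : i = j
    · subst hij
      simpa using h.length_le
    · exact absurd h (hfree i j hij b)

theorem prefix_toWord_lift_mk (hfree : ConjugatorPrefixFree u)
    (hu : ∀ i, ∀ p ∈ (u i).toWord.getLast?, p.1 ≠ i) (hw : ∀ i, w i = u i * of i * (u i)⁻¹)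
    (a : α × Bool) (τ : List (α × Bool)) (hred : IsReduced (a :: τ)) :
    (u a.1).toWord ++ [a] <+: (lift w (mk (a :: τ))).toWord := by
  have hword (a : α × Bool) :
      (lift w (mk [a])).toWord = (u a.1).toWord ++ a :: invRev (u a.1).toWord := by
    rw [← toWord_mul_mk_singleton_mul_inv (hu a.1)]
    obtain ⟨i, _ | _⟩ := a <;> simp [mk_singleton, hw, mul_assoc]
  induction τ generalizing a with
  | nil => exact ⟨invRev (u a.1).toWord, by rw [hword]; simp⟩
  | cons b τ ih =>
    obtain ⟨hab, hbτ⟩ := isReduced_cons_cons.1 hred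
    rw [show a :: b :: τ = [a] ++ b :: τ from rfl, ← mul_mk, _root_.map_mul]
    refine prefix_toWord_mul (hword a) fun h => ?_
    obtain ⟨j, c⟩ := b
    have hba : (a.1, !a.2) = (j, c) :=
      (List.prefix_or_prefix_of_prefix h (ih (j, c) hbτ)).elim hfree.eq_of_prefix
        fun h => (hfree.eq_of_prefix h).symm
    obtain ⟨rfl, rfl⟩ := Prod.mk.inj hba
    simp at hab

theorem eq_of_closure_range_eq_top (hfree : ConjugatorPrefixFree u)
    (hu : ∀ i, ∀ p ∈ (u i).toWord.getLast?, p.1 ≠ i) (hw : ∀ i, w i = u i * of i * (u i)⁻¹)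
    (hgen : Subgroup.closure (Set.range w) = ⊤) : w = of := by
  funext k
  obtain ⟨x, hx⟩ := lift_surjective_iff_closure_range_eq_top.2 hgen (of k)
  rcases hσ : x.toWord with _ | ⟨a, τ⟩
  · rw [toWord_eq_nil_iff] at hσ
    rw [hσ, _root_.map_one] at hx
    exact absurd hx (one_ne_of k)
  have h := hfree.prefix_toWord_lift_mk hu hw a τ (hσ ▸ isReduced_toWord)
  rw [← hσ, mk_toWord, hx, toWord_of] at h
  obtain ⟨hu1, rfl⟩ : u a.1 = 1 ∧ a = (k, true) := by
    simpa [List.append_eq_singleton_iff] using (List.prefix_concat_iff (l₂ := [])).1 h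
  rw [hw, hu1]
  group

end ConjugatorPrefixFree

end FreeGroup

namespace elemConjMove

open FreeGroup Function

variable {μ : ℕ} {w w' : Fin μ → FreeGroup (Fin μ)}

theorem symm (h : elemConjMove μ w w') : elemConjMove μ w' w := by
  obtain ⟨i, j, hij, rfl | rfl⟩ := h
  · exact ⟨i, j, hij, Or.inr (by simp [update_of_ne hij, mul_assoc])⟩
  · exact ⟨i, j, hij, Or.inl (by simp [update_of_ne hij, mul_assoc])⟩

instance : Std.Symm (elemConjMove μ) := ⟨fun _ _ => symm⟩

theorem map {F : Type*} [FunLike F (FreeGroup (Fin μ)) (FreeGroup (Fin μ))]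
    [MonoidHomClass F (FreeGroup (Fin μ)) (FreeGroup (Fin μ))] (φ : F)
    (h : elemConjMove μ w w') : elemConjMove μ (φ ∘ w) (φ ∘ w') := by
  obtain ⟨i, j, hij, rfl | rfl⟩ := h
  · exact ⟨i, j, hij, Or.inl (by simp [comp_update])⟩
  · exact ⟨i, j, hij, Or.inr (by simp [comp_update])⟩

theorem exists_eq_update_conj (h : elemConjMove μ w w') :
    ∃ j, ∃ g ∈ Subgroup.closure (Set.range w), w' = update w j (g⁻¹ * w j * g) := by
  obtain ⟨i, j, -, rfl | rfl⟩ := h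
  · exact ⟨j, w i, Subgroup.subset_closure ⟨i, rfl⟩, rfl⟩
  · exact ⟨j, (w i)⁻¹, inv_mem (Subgroup.subset_closure ⟨i, rfl⟩), by rw [inv_inv]⟩

theorem isConj (h : elemConjMove μ w w') (k : Fin μ) : IsConj (w k) (w' k) := by
  obtain ⟨j, g, -, rfl⟩ := h.exists_eq_update_conj
  by_cases hk : k = j
  · subst hk
    exact isConj_iff.2 ⟨g⁻¹, by simp [mul_assoc]⟩
  · rw [update_of_ne hk]

theorem closure_range_le (h : elemConjMove μ w w') :
    Subgroup.closure (Set.range w') ≤ Subgroup.closure (Set.range w) := by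
  obtain ⟨j, g, hg, rfl⟩ := h.exists_eq_update_conj
  refine Subgroup.closure_le _ |>.2 ?_
  rintro _ ⟨k, rfl⟩
  have hw (k : Fin μ) : w k ∈ Subgroup.closure (Set.range w) := Subgroup.subset_closure ⟨k, rfl⟩
  by_cases hk : k = j
  · subst hk
    simpa using mul_mem (mul_mem (inv_mem hg) (hw k)) hg
  · simpa [update_of_ne hk] using hw k

theorem closure_range_eq (h : elemConjMove μ w w') :
    Subgroup.closure (Set.range w') = Subgroup.closure (Set.range w) :=
  le_antisymm h.closure_range_le h.symm.closure_range_le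

end elemConjMove

section

open FreeGroup

theorem exists_elemConjMove_sum_norm_lt {μ : ℕ} {u w : Fin μ → FreeGroup (Fin μ)}
    (hu : ∀ i, ∀ p ∈ (u i).toWord.getLast?, p.1 ≠ i) (hw : ∀ i, w i = u i * of i * (u i)⁻¹)
    {i j : Fin μ} (hij : i ≠ j) {b : Bool} (hpre : (u i).toWord ++ [(i, b)] <+: (u j).toWord) :
    ∃ w', elemConjMove μ w w' ∧ ∑ k, (w' k).norm < ∑ k, (w k).norm := by
  obtain ⟨V, hV⟩ := hpre
  set g := bif b then w i else (w i)⁻¹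
  have hgu : g = u i * mk [(i, b)] * (u i)⁻¹ := by
    cases b <;> simp [g, hw i, mk_singleton, mul_assoc]
  have huj : u j = u i * mk [(i, b)] * mk V := by
    rw [← mk_toWord (x := u j), ← hV, ← mul_mk, ← mul_mk, mk_toWord]
  have hconj : g⁻¹ * w j * g = u i * mk V * of j * (u i * mk V)⁻¹ := by
    rw [hgu, hw j, huj]
    group
  have hlt : (g⁻¹ * w j * g).norm < (w j).norm := by
    have hwj : (w j).norm = 2 * (u j).norm + 1 := by
      rw [hw j]
      exact norm_mul_mk_singleton_mul_inv (a := (j, true)) (hu j)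
    have hnuj : (u j).norm = (u i).norm + 1 + V.length := by
      rw [FreeGroup.norm, FreeGroup.norm, ← hV, List.length_append, List.length_append,
        List.length_singleton]
    calc (g⁻¹ * w j * g).norm ≤ 2 * (u i * mk V).norm + (of j).norm := by
          rw [hconj]; exact norm_mul_mul_inv_le _ _
      _ ≤ 2 * ((u i).norm + V.length) + 1 := by
          rw [norm_of]
          have := norm_mul_le (u i) (mk V)
          have : (mk V).norm ≤ V.length := norm_mk_le
          omega
      _ < (w j).norm := by omega
  refine ⟨Function.update w j (g⁻¹ * w j * g), ?_, ?_⟩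
  · cases b
    · exact ⟨i, j, hij, Or.inr (by simp [g])⟩
    · exact ⟨i, j, hij, Or.inl rfl⟩
  · refine Finset.sum_lt_sum (fun k _ => ?_) ⟨j, Finset.mem_univ j, by simpa using hlt⟩
    by_cases hk : k = j
    · subst hk; simpa using hlt.le
    · simp [Function.update_of_ne hk]

theorem reflTransGen_elemConjMove_of_isConj {μ : ℕ} {w : Fin μ → FreeGroup (Fin μ)}
    (hgen : Subgroup.closure (Set.range w) = ⊤) (hconj : ∀ i, IsConj (of i) (w i)) :
    Relation.ReflTransGen (elemConjMove μ) w of := by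
  induction hn : ∑ k, (w k).norm using Nat.strong_induction_on generalizing w with
  | _ n ih =>
    choose u hu hw using fun i => exists_eq_conj_of_isConj (hconj i)
    by_cases hfree : ConjugatorPrefixFree u
    · rw [hfree.eq_of_closure_range_eq_top hu hw hgen]
    simp only [ConjugatorPrefixFree, not_forall, not_not] at hfree
    obtain ⟨i, j, hij, b, hpre⟩ := hfree
    obtain ⟨w', hmove, hlt⟩ := exists_elemConjMove_sum_norm_lt hu hw hij hpre
    exact .head hmove <| ih _ (hn ▸ hlt) (hmove.closure_range_eq.trans hgen)
      (fun k => (hconj k).trans (hmove.isConj k)) rfl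

end

/-- Humphries; conjectured by Gusein-Zade: If two free generating systems
`(ω₁, …, ω_μ)` and `(ω'₁, …, ω'_μ)` of the free group of rank `μ` are componentwise
conjugate, then one is obtained from the other by a finite sequence of the elementary
moves `α_i(j)`, `β_i(j)`. -/
theorem conjugate_free_generating_systems_related_by_moves (μ : ℕ)
    (ω ω' : Fin μ → FreeGroup (Fin μ))
    (hω : ∃ φ : FreeGroup (Fin μ) ≃* FreeGroup (Fin μ), ∀ i, φ (FreeGroup.of i) = ω i)
    (hω' : ∃ φ : FreeGroup (Fin μ) ≃* FreeGroup (Fin μ), ∀ i, φ (FreeGroup.of i) = ω' i)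
    (hconj : ∀ i, IsConj (ω i) (ω' i)) :
    Relation.ReflTransGen (elemConjMove μ) ω ω' := by
  obtain ⟨φ, rfl⟩ : ∃ φ : FreeGroup (Fin μ) ≃* FreeGroup (Fin μ), ω = φ ∘ FreeGroup.of :=
    hω.imp fun φ hφ => (funext hφ).symm
  obtain ⟨φ', hφ'⟩ := hω'
  set w := φ.symm ∘ ω'
  have hgen : Subgroup.closure (Set.range w) = ⊤ := by
    rw [← FreeGroup.lift_surjective_iff_closure_range_eq_top]
    have : FreeGroup.lift w = (φ'.trans φ.symm).toMonoidHom :=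
      FreeGroup.ext_hom _ _ fun i => by simp [w, hφ']
    rw [this]
    exact (φ'.trans φ.symm).surjective
  have hconj' (i : Fin μ) : IsConj (FreeGroup.of i) (w i) := by
    simpa [w] using φ.symm.toMonoidHom.map_isConj (hconj i)
  have hchain := (reflTransGen_elemConjMove_of_isConj hgen hconj').lift (φ ∘ ·)
    fun _ _ h => h.map φ
  have hω'_eq : φ ∘ w = ω' := by funext; simp [w]
  simp only [Function.onFun, hω'_eq] at hchain
  exact Std.Symm.symm _ _ hchain
end
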